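/- arXiv:2505.05168 — 2 statements merged into one kernel-verified Lean document; each statement's English description precedes it below -/
import Mathlib

section
/- Let (M, d) be a metric space, x₀ ∈ M, δ > 0, and K : M → [0, ∞) a measurable kernel with K(x) = 0 whenever d(x, x₀) > δ. Let P be a Borel probability measure on M with μ_j = ∫_M K(x) d(x, x₀)^j dP(x) finite for j = 0, 1, 2, 3 and σ₀² := μ₀μ₂ − μ₁² > 0, and let s(x) = σ₀⁻² K(x)(μ₂ − μ₁ d(x, x₀)). Let φ : M → ℝ be measurable, integrable against |s| dP, and suppose there are c ∈ ℝ and C ≥ 0 such that |φ(x) − φ(x₀) − c·d(x, x₀)| ≤ C·d(x, x₀)² for all x with d(x, x₀) ≤ δ. Then | ∫_M s(x) φ(x) dP(x) − φ(x₀) | ≤ C (μ₂² + |μ₁| μ₃) / σ₀². -/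
open MeasureTheory

/-- Bias-correction estimate for the intrinsic local linear Fréchet weights: a function
`φ` admitting a first-order Taylor-type bound at `x₀` is reproduced by the signed weight
`s(x) = σ₀⁻² K(x)(μ₂ − μ₁ d(x, x₀))` up to the second-order remainder
`C (μ₂² + |μ₁| μ₃)/σ₀²`. -/
theorem intrinsic_local_linear_bias_correction
    {M : Type*} [MetricSpace M] [MeasurableSpace M] [BorelSpace M]
    (P : Measure M) [IsProbabilityMeasure P]
    (x₀ : M) (δ : ℝ) (hδ : 0 < δ)
    (K : M → ℝ) (hK_meas : Measurable K) (hK_nonneg : ∀ x, 0 ≤ K x)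
    (hK_supp : ∀ x, δ < dist x x₀ → K x = 0)
    (hμint : ∀ j : ℕ, j ≤ 3 → Integrable (fun x => K x * dist x x₀ ^ j) P)
    (μ : ℕ → ℝ) (hμ : ∀ j : ℕ, μ j = ∫ x, K x * dist x x₀ ^ j ∂P)
    (σ0sq : ℝ) (hσdef : σ0sq = μ 0 * μ 2 - (μ 1) ^ 2) (hσpos : 0 < σ0sq)
    (s : M → ℝ) (hs : ∀ x, s x = σ0sq⁻¹ * (K x * (μ 2 - μ 1 * dist x x₀)))
    (φ : M → ℝ) (hφ_meas : Measurable φ)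
    (hφ_int : Integrable (fun x => s x * φ x) P)
    (c C : ℝ) (hC : 0 ≤ C)
    (hφ : ∀ x, dist x x₀ ≤ δ → |φ x - φ x₀ - c * dist x x₀| ≤ C * dist x x₀ ^ 2) :
    |(∫ x, s x * φ x ∂P) - φ x₀| ≤ C * ((μ 2) ^ 2 + |μ 1| * μ 3) / σ0sq := by
  have hσne : σ0sq ≠ 0 := hσpos.ne'
  have hσinv : (0:ℝ) ≤ σ0sq⁻¹ := (inv_pos.mpr hσpos).le
  have h0 := hμint 0 (by norm_num)
  have h1 := hμint 1 (by norm_num)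
  have h2 := hμint 2 (by norm_num)
  have h3 := hμint 3 (by norm_num)
  have hμ2nn : 0 ≤ μ 2 := by
    rw [hμ 2]
    exact integral_nonneg fun x => mul_nonneg (hK_nonneg x) (by positivity)
  have hs_eq : s = fun x => σ0sq⁻¹ * μ 2 * (K x * dist x x₀ ^ 0)
      - σ0sq⁻¹ * μ 1 * (K x * dist x x₀ ^ 1) := by
    funext x; rw [hs x]; simp [pow_zero, pow_one]; ring
  have hs_int : Integrable s P := by
    rw [hs_eq]; exact (h0.const_mul _).sub (h1.const_mul _)
  have hsd_eq : (fun x => s x * dist x x₀) = fun x => σ0sq⁻¹ * μ 2 * (K x * dist x x₀ ^ 1)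
      - σ0sq⁻¹ * μ 1 * (K x * dist x x₀ ^ 2) := by
    funext x; rw [hs x]; simp [pow_one]; ring
  have hsd_int : Integrable (fun x => s x * dist x x₀) P := by
    rw [hsd_eq]; exact (h1.const_mul _).sub (h2.const_mul _)
  have hS : ∫ x, s x ∂P = 1 := by
    rw [hs_eq, integral_sub (h0.const_mul _) (h1.const_mul _),
      integral_const_mul, integral_const_mul, ← hμ 0, ← hμ 1]
    have : σ0sq⁻¹ * μ 2 * μ 0 - σ0sq⁻¹ * μ 1 * μ 1 = σ0sq⁻¹ * σ0sq := by
      rw [hσdef]; ring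
    rw [this, inv_mul_cancel₀ hσne]
  have hSd : ∫ x, s x * dist x x₀ ∂P = 0 := by
    rw [hsd_eq, integral_sub (h1.const_mul _) (h2.const_mul _),
      integral_const_mul, integral_const_mul, ← hμ 1, ← hμ 2]
    ring
  have hg_eq : (fun x => s x * (φ x - φ x₀ - c * dist x x₀))
      = fun x => s x * φ x - s x * φ x₀ - c * (s x * dist x x₀) := by
    funext x; ring
  have hg_int : Integrable (fun x => s x * (φ x - φ x₀ - c * dist x x₀)) P := by
    rw [hg_eq]; exact (hφ_int.sub (hs_int.mul_const _)).sub (hsd_int.const_mul c)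
  have hA : Integrable (fun x => s x * φ x - s x * φ x₀) P := hφ_int.sub (hs_int.mul_const _)
  have hB : Integrable (fun x => c * (s x * dist x x₀)) P := hsd_int.const_mul c
  have hkey : ∫ x, s x * (φ x - φ x₀ - c * dist x x₀) ∂P
      = (∫ x, s x * φ x ∂P) - φ x₀ := by
    rw [hg_eq, integral_sub hA hB, integral_sub hφ_int (hs_int.mul_const _),
      integral_mul_const, integral_const_mul, hS, hSd]
    ring
  have hb_int : Integrable (fun x => C * σ0sq⁻¹ * μ 2 * (K x * dist x x₀ ^ 2)
      + C * σ0sq⁻¹ * |μ 1| * (K x * dist x x₀ ^ 3)) P :=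
    (h2.const_mul _).add (h3.const_mul _)
  have hpt : ∀ x, |s x * (φ x - φ x₀ - c * dist x x₀)|
      ≤ C * σ0sq⁻¹ * μ 2 * (K x * dist x x₀ ^ 2)
        + C * σ0sq⁻¹ * |μ 1| * (K x * dist x x₀ ^ 3) := by
    intro x
    by_cases hd : dist x x₀ ≤ δ
    · rw [abs_mul]
      have hKx := hK_nonneg x
      have hdx : (0:ℝ) ≤ dist x x₀ := dist_nonneg
      have hsb : |s x| ≤ σ0sq⁻¹ * (K x * (μ 2 + |μ 1| * dist x x₀)) := by
        rw [hs x, abs_mul, abs_mul, abs_of_nonneg hσinv, abs_of_nonneg hKx]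
        have : |μ 2 - μ 1 * dist x x₀| ≤ μ 2 + |μ 1| * dist x x₀ := by
          calc |μ 2 - μ 1 * dist x x₀| ≤ |μ 2| + |μ 1 * dist x x₀| := abs_sub _ _
            _ = μ 2 + |μ 1| * dist x x₀ := by
              rw [abs_of_nonneg hμ2nn, abs_mul, abs_of_nonneg hdx]
        exact mul_le_mul_of_nonneg_left (mul_le_mul_of_nonneg_left this hKx) hσinv
      calc |s x| * |φ x - φ x₀ - c * dist x x₀|
          ≤ (σ0sq⁻¹ * (K x * (μ 2 + |μ 1| * dist x x₀))) * (C * dist x x₀ ^ 2) :=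
            mul_le_mul hsb (hφ x hd) (abs_nonneg _) (by positivity)
        _ = C * σ0sq⁻¹ * μ 2 * (K x * dist x x₀ ^ 2)
              + C * σ0sq⁻¹ * |μ 1| * (K x * dist x x₀ ^ 3) := by ring
    · have hK0 : K x = 0 := hK_supp x (lt_of_not_ge hd)
      rw [hs x, hK0]
      simp
  calc |(∫ x, s x * φ x ∂P) - φ x₀|
      = |∫ x, s x * (φ x - φ x₀ - c * dist x x₀) ∂P| := by rw [hkey]
    _ ≤ ∫ x, |s x * (φ x - φ x₀ - c * dist x x₀)| ∂P := by
        have h := norm_integral_le_integral_norm (μ := P)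
          (fun x => s x * (φ x - φ x₀ - c * dist x x₀))
        simp only [Real.norm_eq_abs] at h
        exact h
    _ ≤ ∫ x, (C * σ0sq⁻¹ * μ 2 * (K x * dist x x₀ ^ 2)
          + C * σ0sq⁻¹ * |μ 1| * (K x * dist x x₀ ^ 3)) ∂P :=
        integral_mono hg_int.abs hb_int hpt
    _ = C * ((μ 2) ^ 2 + |μ 1| * μ 3) / σ0sq := by
        rw [integral_add (h2.const_mul _) (h3.const_mul _),
          integral_const_mul, integral_const_mul, ← hμ 2, ← hμ 3]
        field_simp
end

section
/- Let (Ω, 𝒜, P) be a probability space, (M_X, d_X) and (M_Y, d_Y) separable metric spaces with their Borel σ-algebras, X : Ω → M_X and Y : Ω → M_Y measurable, and x₀ ∈ M_X, δ > 0, K : M_X → [0, ∞) a measurable kernel with K(x) = 0 whenever d_X(x, x₀) > δ. Let P_X be the law of X, μ_j = ∫ K(x) d_X(x, x₀)^j dP_X(x) finite for j = 0, 1, 2, 3, σ₀² := μ₀μ₂ − μ₁² > 0, and s(x) = σ₀⁻² K(x)(μ₂ − μ₁ d_X(x, x₀)). Fix ω ∈ M_Y and suppose d_Y(Y, ω)²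 is bounded and integrable. Let m : M_X → ℝ be a measurable function with m(X) a version of the conditional expectation E[d_Y(Y, ω)² | X] (i.e., E[d_Y(Y, ω)² · 1_A(X)] = E[m(X) · 1_A(X)] for every Borel set A ⊆ M_X), and suppose there are c ∈ ℝ and C ≥ 0 such that |m(x) − m(x₀) − c·d_X(x, x₀)| ≤ C·d_X(x, x₀)² for all x with d_X(x, x₀) ≤ δ. Then | E[ s(X) · d_Y(Y, ω)² ] − m(x₀) | ≤ C (μ₂² + |μ₁| μ₃) / σ₀². -/
open MeasureTheory

/-- Asymptotic optimality of the intrinsic local linear Fréchet regression predictor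
(Proposition 1): the weighted Fréchet objective `E[s(X) d_Y(Y, ω)²]` built from the
signed local linear weights agrees with the conditional Fréchet objective
`m(x₀) = E[d_Y(Y, ω)² | X = x₀]` up to the second-order remainder
`C (μ₂² + |μ₁| μ₃)/σ₀²`. -/
theorem intrinsic_local_linear_frechet_optimality
    {Ω : Type*} [MeasurableSpace Ω] (P : Measure Ω) [IsProbabilityMeasure P]
    {MX : Type*} [MetricSpace MX] [SecondCountableTopology MX]
    [MeasurableSpace MX] [BorelSpace MX]
    {MY : Type*} [MetricSpace MY] [SecondCountableTopology MY]
    [MeasurableSpace MY] [BorelSpace MY]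
    (X : Ω → MX) (Y : Ω → MY) (hX : Measurable X) (hY : Measurable Y)
    (x₀ : MX) (δ : ℝ) (hδ : 0 < δ)
    (K : MX → ℝ) (hK_meas : Measurable K) (hK_nonneg : ∀ x, 0 ≤ K x)
    (hK_supp : ∀ x, δ < dist x x₀ → K x = 0)
    (PX : Measure MX) (hPX : P.map X = PX)
    (hμint : ∀ j : ℕ, j ≤ 3 → Integrable (fun x => K x * dist x x₀ ^ j) PX)
    (μ : ℕ → ℝ) (hμ : ∀ j : ℕ, μ j = ∫ x, K x * dist x x₀ ^ j ∂PX)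
    (σ0sq : ℝ) (hσdef : σ0sq = μ 0 * μ 2 - (μ 1) ^ 2) (hσpos : 0 < σ0sq)
    (s : MX → ℝ) (hs : ∀ x, s x = σ0sq⁻¹ * (K x * (μ 2 - μ 1 * dist x x₀)))
    (ω₀ : MY)
    (hbdd : ∃ B : ℝ, ∀ ωΩ : Ω, dist (Y ωΩ) ω₀ ^ 2 ≤ B)
    (hint : Integrable (fun ωΩ => dist (Y ωΩ) ω₀ ^ 2) P)
    (m : MX → ℝ) (hm_meas : Measurable m)
    (hm_condexp : ∀ A : Set MX, MeasurableSet A →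
      (∫ ωΩ in X ⁻¹' A, dist (Y ωΩ) ω₀ ^ 2 ∂P) = ∫ ωΩ in X ⁻¹' A, m (X ωΩ) ∂P)
    (c C : ℝ) (hC : 0 ≤ C)
    (hm_taylor : ∀ x, dist x x₀ ≤ δ →
      |m x - m x₀ - c * dist x x₀| ≤ C * dist x x₀ ^ 2) :
    |(∫ ωΩ, s (X ωΩ) * dist (Y ωΩ) ω₀ ^ 2 ∂P) - m x₀|
      ≤ C * ((μ 2) ^ 2 + |μ 1| * μ 3) / σ0sq := by
  classical
  obtain ⟨B₀, hB₀⟩ := hbdd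
  set B : ℝ := max B₀ 0 with hBdef
  have hB : ∀ ωΩ : Ω, dist (Y ωΩ) ω₀ ^ 2 ≤ B := fun ωΩ => (hB₀ ωΩ).trans (le_max_left _ _)
  have hBnn : (0:ℝ) ≤ B := le_max_right _ _
  have hd2_nonneg : ∀ ωΩ : Ω, (0:ℝ) ≤ dist (Y ωΩ) ω₀ ^ 2 := fun ωΩ => sq_nonneg _
  have hmX_meas : Measurable (fun ωΩ => m (X ωΩ)) := hm_meas.comp hX
  have hd2_meas : Measurable (fun ωΩ => dist (Y ωΩ) ω₀ ^ 2) :=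
    ((hY.dist measurable_const).pow_const 2)
  -- Step A: a.e. bound 0 ≤ m ∘ X ≤ B
  have key_null : ∀ (A : Set MX), MeasurableSet A →
      (∀ x ∈ A, ∃ n : ℕ, |m x| ≤ n) →
      (∀ ωΩ, X ωΩ ∈ A → dist (Y ωΩ) ω₀ ^ 2 < m (X ωΩ)) ∨
      (∀ ωΩ, X ωΩ ∈ A → m (X ωΩ) < dist (Y ωΩ) ω₀ ^ 2) →
      False ∨ True := fun _ _ _ _ => Or.inr trivial
  -- helper: if on X⁻¹' A we have pointwise strict inequality (one way) and m bounded on A,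
  -- then P (X⁻¹' A) = 0
  have null_of_lt : ∀ (A : Set MX), MeasurableSet A → ∀ (n : ℕ), (∀ x ∈ A, |m x| ≤ n) →
      (∀ ωΩ, X ωΩ ∈ A → dist (Y ωΩ) ω₀ ^ 2 < m (X ωΩ)) ∨
      (∀ ωΩ, X ωΩ ∈ A → m (X ωΩ) < dist (Y ωΩ) ω₀ ^ 2) →
      P (X ⁻¹' A) = 0 := by
    intro A hA n hbnd hlt
    set S : Set Ω := X ⁻¹' A with hSdef
    have hS : MeasurableSet S := hX hA
    have hmem : ∀ᵐ ωΩ ∂(P.restrict S), ωΩ ∈ S := ae_restrict_mem hS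
    have hmS : IntegrableOn (fun ωΩ => m (X ωΩ)) S P := by
      refine Integrable.mono' (integrable_const (n:ℝ)) hmX_meas.aestronglyMeasurable ?_
      filter_upwards [hmem] with ωΩ hω
      simpa [Real.norm_eq_abs] using hbnd _ hω
    have hdS : IntegrableOn (fun ωΩ => dist (Y ωΩ) ω₀ ^ 2) S P := hint.integrableOn
    have heq : ∫ ωΩ in S, dist (Y ωΩ) ω₀ ^ 2 ∂P = ∫ ωΩ in S, m (X ωΩ) ∂P :=
      hm_condexp A hA
    -- define f as the positive difference
    rcases hlt with hlt | hlt
    · -- m ∘ X - d² > 0 on S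
      have hzero : ∫ ωΩ in S, (m (X ωΩ) - dist (Y ωΩ) ω₀ ^ 2) ∂P = 0 := by
        rw [integral_sub hmS hdS, heq, sub_self]
      have hpos : ∀ᵐ ωΩ ∂(P.restrict S), 0 ≤ m (X ωΩ) - dist (Y ωΩ) ω₀ ^ 2 := by
        filter_upwards [hmem] with ωΩ hω
        exact le_of_lt (sub_pos.mpr (hlt _ hω))
      have := (setIntegral_eq_zero_iff_of_nonneg_ae hpos (hmS.sub hdS)).mp hzero
      have hfalse : ∀ᵐ ωΩ ∂(P.restrict S), False := by
        filter_upwards [this, hmem] with ωΩ h0 hω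
        exact absurd h0 (by simpa using (sub_pos.mpr (hlt _ hω)).ne')
      have : P.restrict S = 0 := by
        have := Filter.eventually_false_iff_eq_bot.mp hfalse
        exact MeasureTheory.ae_eq_bot.mp this
      exact Measure.restrict_eq_zero.mp this
    · have hzero : ∫ ωΩ in S, (dist (Y ωΩ) ω₀ ^ 2 - m (X ωΩ)) ∂P = 0 := by
        rw [integral_sub hdS hmS, heq, sub_self]
      have hpos : ∀ᵐ ωΩ ∂(P.restrict S), 0 ≤ dist (Y ωΩ) ω₀ ^ 2 - m (X ωΩ) := by
        filter_upwards [hmem] with ωΩ hω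
        exact le_of_lt (sub_pos.mpr (hlt _ hω))
      have := (setIntegral_eq_zero_iff_of_nonneg_ae hpos (hdS.sub hmS)).mp hzero
      have hfalse : ∀ᵐ ωΩ ∂(P.restrict S), False := by
        filter_upwards [this, hmem] with ωΩ h0 hω
        exact absurd h0 (by simpa using (sub_pos.mpr (hlt _ hω)).ne')
      have : P.restrict S = 0 := by
        have := Filter.eventually_false_iff_eq_bot.mp hfalse
        exact MeasureTheory.ae_eq_bot.mp this
      exact Measure.restrict_eq_zero.mp this
  have hm_upper : ∀ᵐ ωΩ ∂P, m (X ωΩ) ≤ B := by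
    have hnull : ∀ n : ℕ, P (X ⁻¹' {x | B < m x ∧ m x ≤ n}) = 0 := by
      intro n
      refine null_of_lt _ ?_ n ?_ (Or.inl ?_)
      · exact (measurableSet_lt measurable_const hm_meas).inter
          (measurableSet_le hm_meas measurable_const)
      · rintro x ⟨h1, h2⟩
        rw [abs_of_nonneg (le_trans hBnn h1.le)]; exact h2
      · rintro ωΩ ⟨h1, _⟩
        exact lt_of_le_of_lt (hB ωΩ) h1
    have hsub : {ωΩ | ¬ m (X ωΩ) ≤ B} ⊆ ⋃ n : ℕ, X ⁻¹' {x | B < m x ∧ m x ≤ n} := by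
      intro ωΩ hω
      simp only [Set.mem_setOf_eq, not_le] at hω
      exact Set.mem_iUnion.mpr ⟨⌈m (X ωΩ)⌉₊, hω, Nat.le_ceil _⟩
    have : P {ωΩ | ¬ m (X ωΩ) ≤ B} = 0 :=
      measure_mono_null hsub (measure_iUnion_null hnull)
    exact this
  have hm_lower : ∀ᵐ ωΩ ∂P, 0 ≤ m (X ωΩ) := by
    have hnull : ∀ n : ℕ, P (X ⁻¹' {x | m x < 0 ∧ -(n:ℝ) ≤ m x}) = 0 := by
      intro n
      refine null_of_lt _ ?_ n ?_ (Or.inr ?_)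
      · exact (measurableSet_lt hm_meas measurable_const).inter
          (measurableSet_le measurable_const hm_meas)
      · rintro x ⟨h1, h2⟩
        rw [abs_of_nonpos h1.le]; linarith
      · rintro ωΩ ⟨h1, _⟩
        exact lt_of_lt_of_le h1 (hd2_nonneg ωΩ)
    have hsub : {ωΩ | ¬ 0 ≤ m (X ωΩ)} ⊆ ⋃ n : ℕ, X ⁻¹' {x | m x < 0 ∧ -(n:ℝ) ≤ m x} := by
      intro ωΩ hω
      simp only [Set.mem_setOf_eq, not_le] at hω
      refine Set.mem_iUnion.mpr ⟨⌈-(m (X ωΩ))⌉₊, hω, ?_⟩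
      have := Nat.le_ceil (-(m (X ωΩ)))
      linarith
    exact measure_mono_null hsub (measure_iUnion_null hnull)
  have hm_int : Integrable (fun ωΩ => m (X ωΩ)) P := by
    refine Integrable.mono' (integrable_const B) hmX_meas.aestronglyMeasurable ?_
    filter_upwards [hm_upper, hm_lower] with ωΩ h1 h2
    rwa [Real.norm_eq_abs, abs_of_nonneg h2]
  -- Step C: m ∘ X is a version of the conditional expectation
  have hm_le := hX.comap_le
  have hX_mX : Measurable[(MeasurableSpace.comap X inferInstance)] X := Measurable.of_comap_le le_rfl
  have hcond : (fun ωΩ => m (X ωΩ)) =ᵐ[P]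
      P[fun ωΩ => dist (Y ωΩ) ω₀ ^ 2 | (MeasurableSpace.comap X inferInstance)] := by
    refine ae_eq_condExp_of_forall_setIntegral_eq hm_le hint
      (fun t _ _ => hm_int.integrableOn) ?_ ?_
    · rintro t ⟨A, hA, rfl⟩ _
      exact (hm_condexp A hA).symm
    · exact StronglyMeasurable.aestronglyMeasurable
        (Measurable.stronglyMeasurable (hm_meas.comp hX_mX))
  -- measurability of s
  have hs_meas : Measurable s := by
    have : s = fun x => σ0sq⁻¹ * (K x * (μ 2 - μ 1 * dist x x₀)) := funext hs
    rw [this]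
    exact measurable_const.mul (hK_meas.mul (measurable_const.sub
      (measurable_const.mul ((measurable_id.dist measurable_const)))))
  -- integrability of s and s * dist w.r.t. PX
  have hseq : s = fun x => σ0sq⁻¹ * (μ 2 * (K x * dist x x₀ ^ 0) - μ 1 * (K x * dist x x₀ ^ 1)) := by
    funext x; rw [hs]; ring
  have hs_int : Integrable s PX := by
    rw [hseq]
    exact (((hμint 0 (by norm_num)).const_mul (μ 2)).sub
      ((hμint 1 (by norm_num)).const_mul (μ 1))).const_mul σ0sq⁻¹
  have hsd_int : Integrable (fun x => s x * dist x x₀) PX := by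
    have : (fun x => s x * dist x x₀) =
        fun x => σ0sq⁻¹ * (μ 2 * (K x * dist x x₀ ^ 1) - μ 1 * (K x * dist x x₀ ^ 2)) := by
      funext x; rw [hs]; ring
    rw [this]
    exact (((hμint 1 (by norm_num)).const_mul (μ 2)).sub
      ((hμint 2 (by norm_num)).const_mul (μ 1))).const_mul σ0sq⁻¹
  -- ∫ s dPX = 1 and ∫ s·dist dPX = 0
  have hI0 : ∫ x, s x ∂PX = 1 := by
    rw [hseq]
    rw [integral_const_mul, integral_sub ((hμint 0 (by norm_num)).const_mul (μ 2))
      ((hμint 1 (by norm_num)).const_mul (μ 1)), integral_const_mul, integral_const_mul,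
      ← hμ 0, ← hμ 1]
    have : μ 0 * μ 2 - μ 1 * μ 1 = σ0sq := by rw [hσdef]; ring
    rw [show μ 2 * μ 0 - μ 1 * μ 1 = σ0sq by rw [hσdef]; ring]
    field_simp
  have hI1 : ∫ x, s x * dist x x₀ ∂PX = 0 := by
    have h : (fun x => s x * dist x x₀) =
        fun x => σ0sq⁻¹ * (μ 2 * (K x * dist x x₀ ^ 1) - μ 1 * (K x * dist x x₀ ^ 2)) := by
      funext x; rw [hs]; ring
    rw [h, integral_const_mul, integral_sub ((hμint 1 (by norm_num)).const_mul (μ 2))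
      ((hμint 2 (by norm_num)).const_mul (μ 1)), integral_const_mul, integral_const_mul,
      ← hμ 1, ← hμ 2]
    ring
  -- integrability of s ∘ X
  have hsX_int : Integrable (fun ωΩ => s (X ωΩ)) P := by
    have := hs_int
    rw [← hPX] at this
    exact (integrable_map_measure hs_meas.aestronglyMeasurable hX.aemeasurable).mp this
  have hsXd2_int : Integrable (fun ωΩ => s (X ωΩ) * dist (Y ωΩ) ω₀ ^ 2) P := by
    refine Integrable.mono' (hsX_int.abs.const_mul B)
      ((hs_meas.comp hX).mul hd2_meas).aestronglyMeasurable ?_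
    filter_upwards with ωΩ
    rw [Real.norm_eq_abs, abs_mul, abs_of_nonneg (hd2_nonneg ωΩ), mul_comm B]
    exact mul_le_mul_of_nonneg_left (hB ωΩ) (abs_nonneg _)
  -- Step F: E[s(X) d²] = E[s(X) m(X)]
  have hpull : P[(fun ωΩ => s (X ωΩ)) * (fun ωΩ => dist (Y ωΩ) ω₀ ^ 2) | (MeasurableSpace.comap X inferInstance)]
      =ᵐ[P] (fun ωΩ => s (X ωΩ)) * P[fun ωΩ => dist (Y ωΩ) ω₀ ^ 2 | (MeasurableSpace.comap X inferInstance)] :=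
    condExp_mul_of_stronglyMeasurable_left
      (Measurable.stronglyMeasurable (hs_meas.comp hX_mX)) hsXd2_int hint
  have hkey : ∫ ωΩ, s (X ωΩ) * dist (Y ωΩ) ω₀ ^ 2 ∂P
      = ∫ ωΩ, s (X ωΩ) * m (X ωΩ) ∂P := by
    have h1 : ∫ ωΩ, s (X ωΩ) * dist (Y ωΩ) ω₀ ^ 2 ∂P
        = ∫ ωΩ, (P[(fun ωΩ => s (X ωΩ)) * (fun ωΩ => dist (Y ωΩ) ω₀ ^ 2) | (MeasurableSpace.comap X inferInstance)]) ωΩ ∂P :=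
      (integral_condExp hm_le).symm
    rw [h1]
    refine integral_congr_ae ?_
    filter_upwards [hpull, hcond] with ωΩ h2 h3
    rw [h2]
    simp only [Pi.mul_apply]
    rw [← h3]
  -- Step G: push to PX
  have hsm_int_PX : Integrable (fun x => s x * m x) PX := by
    have hset : MeasurableSet {x : MX | 0 ≤ m x ∧ m x ≤ B} :=
      (measurableSet_le measurable_const hm_meas).inter
        (measurableSet_le hm_meas measurable_const)
    have hae : ∀ᵐ x ∂PX, 0 ≤ m x ∧ m x ≤ B := by
      rw [← hPX]
      refine (ae_map_iff hX.aemeasurable hset).mpr ?_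
      filter_upwards [hm_upper, hm_lower] with ωΩ h1 h2
      exact ⟨h2, h1⟩
    refine Integrable.mono' (hs_int.abs.const_mul B)
      (hs_meas.mul hm_meas).aestronglyMeasurable ?_
    filter_upwards [hae] with x hx
    rw [Real.norm_eq_abs, abs_mul, abs_of_nonneg hx.1, mul_comm B]
    exact mul_le_mul_of_nonneg_left hx.2 (abs_nonneg _)
  have hpush : ∫ ωΩ, s (X ωΩ) * m (X ωΩ) ∂P = ∫ x, s x * m x ∂PX := by
    rw [← hPX]
    exact (integral_map hX.aemeasurable (hs_meas.mul hm_meas).aestronglyMeasurable).symm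
  -- Step H: algebra and the final bound over PX
  have hμ2_nonneg : 0 ≤ μ 2 := by
    rw [hμ 2]
    exact integral_nonneg fun x => mul_nonneg (hK_nonneg x) (pow_nonneg dist_nonneg 2)
  set r : MX → ℝ := fun x => s x * (m x - m x₀ - c * dist x x₀) with hrdef
  have hr_int : Integrable r PX := by
    have : r = fun x => s x * m x - (m x₀ * s x + c * (s x * dist x x₀)) := by
      funext x; simp only [hrdef]; ring
    rw [this]
    exact hsm_int_PX.sub ((hs_int.const_mul (m x₀)).add (hsd_int.const_mul c))
  have hr_eq : ∫ x, r x ∂PX = (∫ x, s x * m x ∂PX) - m x₀ := by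
    have h : r = fun x => s x * m x - (m x₀ * s x + c * (s x * dist x x₀)) := by
      funext x; simp only [hrdef]; ring
    have hb : Integrable (fun x => m x₀ * s x) PX := hs_int.const_mul _
    have hc2 : Integrable (fun x => c * (s x * dist x x₀)) PX := hsd_int.const_mul _
    have haux : Integrable (fun x => m x₀ * s x + c * (s x * dist x x₀)) PX := hb.add hc2
    rw [h, integral_sub hsm_int_PX haux, integral_add hb hc2,
      integral_const_mul, integral_const_mul, hI0, hI1]
    ring
  set hfun : MX → ℝ := fun x => (σ0sq⁻¹ * C * μ 2) * (K x * dist x x₀ ^ 2) + (σ0sq⁻¹ * C * |μ 1|) * (K x * dist x x₀ ^ 3) with hhdef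
  have hh_int : Integrable hfun PX :=
    ((hμint 2 (by norm_num)).const_mul _).add ((hμint 3 (by norm_num)).const_mul _)
  have hineq : ∀ x, |r x| ≤ hfun x := by
    intro x
    by_cases hKx : K x = 0
    · have hs0 : s x = 0 := by rw [hs, hKx]; ring
      simp only [hrdef, hhdef, hs0, zero_mul, abs_zero]
      have : (0:ℝ) ≤ σ0sq⁻¹ := (inv_nonneg.mpr hσpos.le)
      positivity
    · have hdist : dist x x₀ ≤ δ := by
        by_contra hcon
        exact hKx (hK_supp x (not_le.mp hcon))
      have htay := hm_taylor x hdist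
      have h1 : |r x| = σ0sq⁻¹ * K x * |μ 2 - μ 1 * dist x x₀| * |m x - m x₀ - c * dist x x₀| := by
        rw [hrdef]
        simp only []
        rw [hs, abs_mul, abs_mul, abs_mul, abs_of_nonneg (inv_nonneg.mpr hσpos.le),
          abs_of_nonneg (hK_nonneg x)]
        ring
      rw [h1]
      have h2 : |μ 2 - μ 1 * dist x x₀| ≤ μ 2 + |μ 1| * dist x x₀ := by
        calc |μ 2 - μ 1 * dist x x₀| ≤ |μ 2| + |μ 1 * dist x x₀| := abs_sub _ _
        _ = μ 2 + |μ 1| * dist x x₀ := by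
            rw [abs_of_nonneg hμ2_nonneg, abs_mul, abs_of_nonneg dist_nonneg]
      have h3 : σ0sq⁻¹ * K x * |μ 2 - μ 1 * dist x x₀| * |m x - m x₀ - c * dist x x₀|
          ≤ σ0sq⁻¹ * K x * ((μ 2 + |μ 1| * dist x x₀) * (C * dist x x₀ ^ 2)) := by
        have hnn : 0 ≤ σ0sq⁻¹ * K x := mul_nonneg (inv_nonneg.mpr hσpos.le) (hK_nonneg x)
        rw [mul_assoc (σ0sq⁻¹ * K x)]
        refine mul_le_mul_of_nonneg_left ?_ hnn
        exact mul_le_mul h2 htay (abs_nonneg _)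
          (add_nonneg hμ2_nonneg (mul_nonneg (abs_nonneg _) dist_nonneg))
      refine h3.trans (le_of_eq ?_)
      simp only [hhdef]
      ring
  have habs : |∫ x, r x ∂PX| ≤ ∫ x, hfun x ∂PX := by
    calc |∫ x, r x ∂PX| ≤ ∫ x, |r x| ∂PX := by
          simpa [Real.norm_eq_abs] using norm_integral_le_integral_norm r (μ := PX)
    _ ≤ ∫ x, hfun x ∂PX := integral_mono hr_int.abs hh_int hineq
  have hh_val : ∫ x, hfun x ∂PX = C * ((μ 2) ^ 2 + |μ 1| * μ 3) / σ0sq := by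
    simp only [hhdef]
    rw [integral_add ((hμint 2 (by norm_num)).const_mul _) ((hμint 3 (by norm_num)).const_mul _),
      integral_const_mul, integral_const_mul, ← hμ 2, ← hμ 3]
    field_simp
  rw [hkey, hpush, ← hr_eq]
  rw [hh_val] at habs
  exact habs
end
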